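/- Let A ∈ ℝ^{n×n} and B ∈ ℝ^{n×m} be such that there exists K ∈ ℝ^{m×n} with (A+BK)^k → 0 as k → ∞, let 𝒞 ⊆ ℝ^{n+m} be a proper C-set, and let S ⊆ ℝⁿ be a C-set. Let 𝒯₁ = (𝒞* ⊕ MᵀS)*, 𝒫₁ = P_x𝒯₁, and for k ≥ 1, 𝒯_{k+1} = (𝒞* ⊕ Mᵀ𝒫_k*)*, 𝒫_{k+1} = P_x𝒯_{k+1}. If either S ⊆ 𝒫₁* or 𝒫₁* ⊆ S, then there exist a proper C-set 𝒫_∞ ⊆ ℝⁿ and a proper C-set 𝒯_∞ ⊆ ℝ^{n+m} such that 𝒫_k → 𝒫_∞ and 𝒯_k → 𝒯_∞ in Hausdorff distance, 𝒯_∞ = (𝒞* ⊕ Mᵀ𝒫_∞*)*, 𝒫_∞ = P_x𝒯_∞, and consequently 𝒫_∞ solves the fixed-point set equation 𝒫_∞ = P_x(𝒞* ⊕ Mᵀ𝒫_∞*)*. -/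

import Mathlib

/-!
Since `𝒫 ↦ P_x(𝒞* ⊕ Mᵀ𝒫*)*` is monotone, the initial comparison of `S` with `𝒫₁*` propagates:
both `𝒯ₖ` and `𝒫ₖ` are monotone sequences of C-sets. A stabilizing feedback `K` gives every `𝒫ₖ`
a common inner ball: with `V x = ∑ᵢ ‖(A + BK)ⁱ x‖`, which satisfies `V x = ‖x‖ + V ((A + BK) x)`,
the point `(x, K x)` lies in every `𝒯ₖ` as soon as `c · V x ≤ 1` for a suitable constant `c`.
A monotone sequence of compact sets converges in Hausdorff distance to its intersection, resp. the
closure of its union, and the fixed-point equations pass to these limits because polarity swaps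
unions and intersections: `(⋂ Xₖ)* = cl ⋃ Xₖ*` for decreasing closed convex `Xₖ ∋ 0`, and by
compactness `⋂ₖ (𝒞* ⊕ Mᵀ Dₖ) = 𝒞* ⊕ Mᵀ ⋂ₖ Dₖ` for decreasing compact `Dₖ`.
-/

open Pointwise Filter Topology Matrix

noncomputable section

/-- ℝⁿ with the standard (Euclidean) inner product. -/
abbrev Rsp (n : ℕ) := EuclideanSpace ℝ (Fin n)

/-- ℝ^{n+m} realized as the L²-product ℝⁿ × ℝᵐ. -/
abbrev Rsp2 (n m : ℕ) := WithLp 2 (Rsp n × Rsp m)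

/-- A C-set: compact, convex, containing the origin. -/
def IsCSet {E : Type*} [NormedAddCommGroup E] [NormedSpace ℝ E] (X : Set E) : Prop :=
  IsCompact X ∧ Convex ℝ X ∧ (0 : E) ∈ X

/-- A proper C-set: a C-set containing the origin in its interior. -/
def IsProperCSet {E : Type*} [NormedAddCommGroup E] [NormedSpace ℝ E] (X : Set E) : Prop :=
  IsCSet X ∧ (0 : E) ∈ interior X

/-- The polar set 𝒳* = {y : ⟨y,x⟩ ≤ 1 for all x ∈ 𝒳}. -/
def polarSet {E : Type*} [NormedAddCommGroup E] [InnerProductSpace ℝ E] (X : Set E) : Set E :=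
  {y | ∀ x ∈ X, inner ℝ y x ≤ (1 : ℝ)}

/-- The Minkowski (gauge) function γ(𝒳,y) = inf{η ≥ 0 : y ∈ η𝒳}. -/
def mgauge {E : Type*} [NormedAddCommGroup E] [NormedSpace ℝ E] (X : Set E) (y : E) : ℝ :=
  sInf {η : ℝ | 0 ≤ η ∧ y ∈ η • X}

variable {n m : ℕ}

/-- The map M = (A B) : ℝ^{n+m} → ℝⁿ, M(x,u) = Ax + Bu. -/
def Mfwd (A : Matrix (Fin n) (Fin n) ℝ) (B : Matrix (Fin n) (Fin m) ℝ) (w : Rsp2 n m) : Rsp n :=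
  Matrix.toEuclideanLin A w.ofLp.1 + Matrix.toEuclideanLin B w.ofLp.2

/-- The transpose map Mᵀ : ℝⁿ → ℝ^{n+m}, Mᵀp = (Aᵀp, Bᵀp). -/
def Mtr (A : Matrix (Fin n) (Fin n) ℝ) (B : Matrix (Fin n) (Fin m) ℝ) (p : Rsp n) : Rsp2 n m :=
  WithLp.toLp 2 (Matrix.toEuclideanLin Aᵀ p, Matrix.toEuclideanLin Bᵀ p)

/-- The projection P_x : ℝ^{n+m} → ℝⁿ, (x,u) ↦ x. -/
def Pxproj : Rsp2 n m → Rsp n := fun w => w.ofLp.1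

open Metric

section Polar
variable {E : Type*} [NormedAddCommGroup E] [InnerProductSpace ℝ E] {X : Set E}

lemma zero_mem_polarSet : (0 : E) ∈ polarSet X := fun _ _ => by simp

lemma polarSet_antitone : Antitone (polarSet (E := E)) :=
  fun _ _ h _ hy x hx => hy x (h hx)

lemma isClosed_polarSet : IsClosed (polarSet X) := by
  simp only [polarSet, Set.ofPred_forall]
  exact isClosed_biInter fun x _ => isClosed_le (by fun_prop) continuous_const

lemma convex_polarSet : Convex ℝ (polarSet X) := by
  intro y hy z hz a b ha hb hab x hx
  rw [inner_add_left, real_inner_smul_left, real_inner_smul_left]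
  nlinarith [hy x hx, hz x hx]

lemma polarSet_subset_closedBall {r : ℝ} (hr : 0 < r) (h : closedBall 0 r ⊆ X) :
    polarSet X ⊆ closedBall 0 r⁻¹ := by
  intro c hc
  rcases eq_or_ne c 0 with rfl | hc0
  · simpa using hr.le
  have hc' : 0 < ‖c‖ := norm_pos_iff.2 hc0
  rw [mem_closedBall_zero_iff, ← mul_one r⁻¹, le_inv_mul_iff₀' hr]
  have hmem : (r / ‖c‖) • c ∈ X := h <| by
    rw [mem_closedBall_zero_iff, norm_smul, Real.norm_of_nonneg (by positivity),
      div_mul_cancel₀ _ hc'.ne']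
  have := hc _ hmem
  rw [real_inner_smul_right, real_inner_self_eq_norm_sq] at this
  calc ‖c‖ * r = r / ‖c‖ * ‖c‖ ^ 2 := by field_simp
    _ ≤ 1 := this

lemma closedBall_subset_polarSet {R : ℝ} (hR : 0 < R) (h : X ⊆ closedBall 0 R) :
    closedBall 0 R⁻¹ ⊆ polarSet X := by
  intro y hy x hx
  rw [mem_closedBall_zero_iff] at hy
  calc inner ℝ y x ≤ ‖y‖ * ‖x‖ := real_inner_le_norm y x
    _ ≤ R⁻¹ * R := mul_le_mul hy (mem_closedBall_zero_iff.1 (h hx)) (norm_nonneg x) (by positivity)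
    _ = 1 := inv_mul_cancel₀ hR.ne'

lemma subset_polarSet_polarSet : X ⊆ polarSet (polarSet X) :=
  fun x hx y hy => real_inner_comm x y ▸ hy x hx

lemma polarSet_polarSet_eq [CompleteSpace E] (hcl : IsClosed X) (hcv : Convex ℝ X)
    (h0 : (0 : E) ∈ X) : polarSet (polarSet X) = X := by
  refine Set.Subset.antisymm (fun z hz => ?_) subset_polarSet_polarSet
  by_contra hzX
  obtain ⟨f, u, hfX, hfz⟩ := geometric_hahn_banach_closed_point hcv hcl hzX
  have hu : 0 < u := by simpa using hfX 0 h0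
  set v := (InnerProductSpace.toDual ℝ E).symm f
  have hv : ∀ x, inner ℝ v x = f x := fun x => InnerProductSpace.toDual_symm_apply
  have hmem : u⁻¹ • v ∈ polarSet X := fun x hx => by
    rw [real_inner_smul_left, hv, inv_mul_le_iff₀ hu, mul_one]
    exact (hfX x hx).le
  have := hz _ hmem
  rw [real_inner_comm, real_inner_smul_left, hv, inv_mul_le_iff₀ hu, mul_one] at this
  linarith

lemma polarSet_iUnion {ι : Sort*} (X : ι → Set E) :
    polarSet (⋃ i, X i) = ⋂ i, polarSet (X i) := by
  ext y
  simp only [polarSet, Set.mem_iInter, Set.mem_ofPred_eq, Set.mem_iUnion, forall_exists_index]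
  exact forall_comm

lemma polarSet_closure : polarSet (closure X) = polarSet X := by
  refine Set.Subset.antisymm (polarSet_antitone subset_closure) fun y hy x hx => ?_
  exact closure_minimal (t := {x | inner ℝ y x ≤ 1}) hy
    (isClosed_le (by fun_prop) continuous_const) hx

lemma polarSet_iInter_of_antitone [CompleteSpace E] {X : ℕ → Set E} (hX : Antitone X)
    (hcl : ∀ k, IsClosed (X k)) (hcv : ∀ k, Convex ℝ (X k)) (h0 : ∀ k, (0 : E) ∈ X k) :
    polarSet (⋂ k, X k) = closure (⋃ k, polarSet (X k)) := by
  have hU : polarSet (closure (⋃ k, polarSet (X k))) = ⋂ k, X k := by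
    rw [polarSet_closure, polarSet_iUnion]
    exact Set.iInter_congr fun k => polarSet_polarSet_eq (hcl k) (hcv k) (h0 k)
  rw [← hU]
  refine polarSet_polarSet_eq isClosed_closure ?_ (subset_closure ?_)
  · exact (Monotone.directed_le fun _ _ h => polarSet_antitone (hX h)).convex_iUnion
      (fun _ => convex_polarSet) |>.closure
  · exact Set.mem_iUnion.2 ⟨0, zero_mem_polarSet⟩

lemma inner_le_of_mem_polarSet {f : E → ℝ} (hf0 : ∀ y, 0 ≤ f y)
    (hf : ∀ t, 0 ≤ t → ∀ y, f (t • y) = t * f y)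
    (hX : {y | f y ≤ 1} ⊆ X) {p : E} (hp : p ∈ polarSet X) (y : E) : inner ℝ p y ≤ f y := by
  refine le_of_forall_gt_imp_ge_of_dense fun t ht => ?_
  have ht0 : 0 < t := (hf0 y).trans_lt ht
  have hmem : t⁻¹ • y ∈ X := hX <| by
    change f (t⁻¹ • y) ≤ 1
    rw [hf _ (inv_nonneg.2 ht0.le), inv_mul_le_iff₀ ht0, mul_one]
    exact ht.le
  have := hp _ hmem
  rwa [real_inner_smul_right, inv_mul_le_iff₀ ht0, mul_one] at this

end Polar

section Compact

lemma image_iInter_of_antitone {X Y : Type*} [TopologicalSpace X] [T2Space X]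
    [TopologicalSpace Y] [T1Space Y] {f : X → Y} (hf : Continuous f) {K : ℕ → Set X}
    (hK : Antitone K) (hc : ∀ k, IsCompact (K k)) : f '' ⋂ k, K k = ⋂ k, f '' K k := by
  refine Set.Subset.antisymm (Set.image_iInter_subset K f) fun y hy => ?_
  have hfib : ∀ k, IsClosed (K k ∩ f ⁻¹' {y}) :=
    fun k => (hc k).isClosed.inter (isClosed_singleton.preimage hf)
  obtain ⟨x, hx⟩ := IsCompact.nonempty_iInter_of_sequence_nonempty_isCompact_isClosed _
    (fun k => Set.inter_subset_inter_left _ (hK k.le_succ))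
    (fun k => by obtain ⟨x, hx, rfl⟩ := Set.mem_iInter.1 hy k; exact ⟨x, hx, rfl⟩)
    ((hc 0).of_isClosed_subset (hfib 0) Set.inter_subset_left) hfib
  rw [← Set.iInter_inter] at hx
  exact ⟨x, hx⟩

lemma iInter_add_of_antitone {G : Type*} [TopologicalSpace G] [T2Space G] [Add G]
    [ContinuousAdd G] {K : Set G} (hK : IsCompact K) {D : ℕ → Set G} (hD : Antitone D)
    (hc : ∀ k, IsCompact (D k)) : ⋂ k, (K + D k) = K + ⋂ k, D k := by
  simp only [← Set.image2_add, ← Set.image_prod]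
  rw [Set.prod_iInter, image_iInter_of_antitone continuous_add
    (fun _ _ h => Set.prod_mono le_rfl (hD h)) fun k => hK.prod (hc k)]

end Compact

section Hausdorff
variable {α : Type*} [MetricSpace α] {K : ℕ → Set α}

lemma tendsto_hausdorffDist_iInter (hK : Antitone K) (hc : ∀ k, IsCompact (K k))
    (hne : ∀ k, (K k).Nonempty) :
    Tendsto (fun k => hausdorffDist (K k) (⋂ k, K k)) atTop (𝓝 0) := by
  have hI : (⋂ k, K k).Nonempty :=
    IsCompact.nonempty_iInter_of_sequence_nonempty_isCompact_isClosed K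
      (fun k => hK k.le_succ) hne (hc 0) fun k => (hc k).isClosed
  rw [Metric.tendsto_atTop]
  intro ε hε
  obtain ⟨N, hN⟩ : ∃ N, K N ⊆ thickening (ε / 2) (⋂ k, K k) :=
    exists_subset_nhds_of_isCompact' hK.directed_ge hc (fun k => (hc k).isClosed)
      fun x hx => isOpen_thickening.mem_nhds (self_subset_thickening (half_pos hε) _ hx)
  refine ⟨N, fun k hk => ?_⟩
  rw [dist_zero_right, Real.norm_of_nonneg hausdorffDist_nonneg]
  refine (hausdorffDist_le_of_infDist (half_pos hε).le (fun x hx => ?_) fun x hx => ?_).trans_lt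
    (half_lt_self hε)
  · exact ((mem_thickening_iff_infDist_lt hI).1 (hN (hK hk hx))).le
  · rw [infDist_zero_of_mem (Set.mem_iInter.1 hx k)]
    exact (half_pos hε).le

lemma tendsto_hausdorffDist_closure_iUnion (hK : Monotone K) (hne : ∀ k, (K k).Nonempty)
    (hc : IsCompact (closure (⋃ k, K k))) :
    Tendsto (fun k => hausdorffDist (K k) (closure (⋃ k, K k))) atTop (𝓝 0) := by
  rw [Metric.tendsto_atTop]
  intro ε hε
  obtain ⟨N, hN⟩ : ∃ N, closure (⋃ k, K k) ⊆ thickening (ε / 2) (K N) := by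
    refine hc.elim_directed_cover _ (fun _ => isOpen_thickening) (fun x hx => ?_)
      fun i j => ⟨max i j, thickening_subset_of_subset _ (hK (le_max_left i j)),
        thickening_subset_of_subset _ (hK (le_max_right i j))⟩
    obtain ⟨y, hy, hxy⟩ := Metric.mem_closure_iff.1 hx (ε / 2) (half_pos hε)
    obtain ⟨j, hj⟩ := Set.mem_iUnion.1 hy
    exact Set.mem_iUnion.2 ⟨j, mem_thickening_iff.2 ⟨y, hj, hxy⟩⟩
  refine ⟨N, fun k hk => ?_⟩
  rw [dist_zero_right, Real.norm_of_nonneg hausdorffDist_nonneg]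
  refine (hausdorffDist_le_of_infDist (half_pos hε).le (fun x hx => ?_) fun x hx => ?_).trans_lt
    (half_lt_self hε)
  · rw [infDist_zero_of_mem (subset_closure (Set.mem_iUnion.2 ⟨k, hx⟩))]
    exact (half_pos hε).le
  · exact ((mem_thickening_iff_infDist_lt (hne k)).1
      (thickening_subset_of_subset _ (hK hk) (hN hx))).le

end Hausdorff

section CSet
variable {E F : Type*} [NormedAddCommGroup E] [InnerProductSpace ℝ E]
  [NormedAddCommGroup F] [InnerProductSpace ℝ F] {X : Set E}

lemma IsCSet.image (hX : IsCSet X) (f : E →L[ℝ] F) : IsCSet (f '' X) :=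
  ⟨hX.1.image f.continuous, hX.2.1.linear_image f.toLinearMap, ⟨0, hX.2.2, map_zero f⟩⟩

lemma isCSet_iInter {X : ℕ → Set E} (hX : ∀ k, IsCSet (X k)) : IsCSet (⋂ k, X k) :=
  ⟨(hX 0).1.of_isClosed_subset (isClosed_iInter fun k => (hX k).1.isClosed)
      (Set.iInter_subset X 0),
    convex_iInter fun k => (hX k).2.1, Set.mem_iInter.2 fun k => (hX k).2.2⟩

lemma isCompact_polarSet [ProperSpace E] {r : ℝ} (hr : 0 < r) (h : closedBall 0 r ⊆ X) :
    IsCompact (polarSet X) :=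
  (isCompact_closedBall 0 r⁻¹).of_isClosed_subset isClosed_polarSet
    (polarSet_subset_closedBall hr h)

end CSet

section PolarStep
variable {E F : Type*} [NormedAddCommGroup E] [InnerProductSpace ℝ E]
  [NormedAddCommGroup F] [InnerProductSpace ℝ F] {C : Set E} {L : F →L[ℝ] E} {D : Set F}

-- With `L = Mᵀ` and `D = 𝒫ₖ*` this is the paper's `𝒯ₖ₊₁`.
def polarStep (C : Set E) (L : F →L[ℝ] E) (D : Set F) : Set E :=
  polarSet (polarSet C + L '' D)

lemma polarStep_antitone : Antitone (polarStep C L) :=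
  fun _ _ h => polarSet_antitone (Set.add_subset_add_left (Set.image_mono h))

lemma isCSet_polarStep [CompleteSpace E] (hC : IsCSet C) (h0 : (0 : F) ∈ D) :
    IsCSet (polarStep C L D) := by
  have hsub : polarStep C L D ⊆ C := by
    refine (polarSet_antitone fun c hc => ?_).trans
      (polarSet_polarSet_eq hC.1.isClosed hC.2.1 hC.2.2).subset
    exact ⟨c, hc, 0, ⟨0, h0, map_zero L⟩, add_zero c⟩
  exact ⟨hC.1.of_isClosed_subset isClosed_polarSet hsub, convex_polarSet, zero_mem_polarSet⟩

lemma closedBall_subset_polarStep {r R : ℝ} (hr : 0 < r) (hC : closedBall 0 r ⊆ C) (hR : 0 ≤ R)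
    (hD : D ⊆ closedBall 0 R) : closedBall 0 (r⁻¹ + ‖L‖ * R)⁻¹ ⊆ polarStep C L D := by
  refine closedBall_subset_polarSet (by positivity) ?_
  rintro _ ⟨c, hc, _, ⟨p, hp, rfl⟩, rfl⟩
  rw [mem_closedBall_zero_iff]
  calc ‖c + L p‖ ≤ ‖c‖ + ‖L‖ * ‖p‖ := (norm_add_le _ _).trans (by gcongr; exact L.le_opNorm p)
    _ ≤ r⁻¹ + ‖L‖ * R := by
      gcongr
      · exact mem_closedBall_zero_iff.1 (polarSet_subset_closedBall hr hC hc)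
      · exact mem_closedBall_zero_iff.1 (hD hp)

lemma polarStep_closure : polarStep C L (closure D) = polarStep C L D := by
  refine Set.Subset.antisymm (polarStep_antitone subset_closure) fun w hw => ?_
  rintro _ ⟨c, hc, _, ⟨q, hq, rfl⟩, rfl⟩
  exact closure_minimal (t := {q | inner ℝ w (c + L q) ≤ 1})
    (fun p hp => hw _ (Set.add_mem_add hc (Set.mem_image_of_mem L hp)))
    (isClosed_le (by fun_prop) continuous_const) hq

lemma polarStep_iUnion {ι : Sort*} (D : ι → Set F) :
    polarStep C L (⋃ i, D i) = ⋂ i, polarStep C L (D i) := by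
  rw [polarStep, Set.image_iUnion, Set.add_iUnion, polarSet_iUnion]
  rfl

lemma closure_iUnion_polarStep [CompleteSpace E] (hC : IsCompact (polarSet C))
    {D : ℕ → Set F} (hD : Antitone D) (hc : ∀ k, IsCompact (D k)) (hcv : ∀ k, Convex ℝ (D k))
    (h0 : ∀ k, (0 : F) ∈ D k) :
    closure (⋃ k, polarStep C L (D k)) = polarStep C L (⋂ k, D k) := by
  have hY : Antitone fun k => polarSet C + L '' D k :=
    fun _ _ h => Set.add_subset_add_left (Set.image_mono (hD h))
  have hYc : ∀ k, IsCompact (polarSet C + L '' D k) :=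
    fun k => hC.add ((hc k).image L.continuous)
  rw [polarStep, image_iInter_of_antitone L.continuous hD hc, ← iInter_add_of_antitone hC
    (fun _ _ h => Set.image_mono (hD h)) fun k => (hc k).image L.continuous,
    polarSet_iInter_of_antitone hY (fun k => (hYc k).isClosed)
      (fun k => convex_polarSet.add ((hcv k).linear_image L.toLinearMap))
      fun k => ⟨0, zero_mem_polarSet, 0, ⟨0, h0 k, map_zero L⟩, add_zero 0⟩]
  rfl

end PolarStep

lemma antitone_of_succ_eq_map {α : Type*} [Preorder α] {G : α → α} (hG : Monotone G)
    {x : ℕ → α} (hx : ∀ k, x (k + 1) = G (x k)) (h : x 1 ≤ x 0) : Antitone x := by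
  refine antitone_nat_of_succ_le fun k => ?_
  induction k with
  | zero => exact h
  | succ k ih => exact (hx (k + 1)).le.trans ((hG ih).trans (hx k).ge)

lemma monotone_of_succ_eq_map {α : Type*} [Preorder α] {G : α → α} (hG : Monotone G)
    {x : ℕ → α} (hx : ∀ k, x (k + 1) = G (x k)) (h : x 0 ≤ x 1) : Monotone x :=
  antitone_of_succ_eq_map (α := αᵒᵈ) hG.dual hx h

section Limit
variable {E F : Type*} [NormedAddCommGroup E] [InnerProductSpace ℝ E]
  [NormedAddCommGroup F] [InnerProductSpace ℝ F]
  {C : Set E} {L : F →L[ℝ] E} {π : E →L[ℝ] F} {T : ℕ → Set E}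

lemma monotone_polarStep_polarSet_image :
    Monotone fun X : Set E => polarStep C L (polarSet (π '' X)) :=
  fun _ _ h => polarStep_antitone (polarSet_antitone (Set.image_mono h))

structure IsPolarStepLimit (C : Set E) (L : F →L[ℝ] E) (π : E →L[ℝ] F) (T : ℕ → Set E)
    (Tinf : Set E) : Prop where
  isCSet : IsCSet Tinf
  isProperCSet_image : IsProperCSet (π '' Tinf)
  tendsto : Tendsto (fun k => hausdorffDist (T k) Tinf) atTop (𝓝 0)
  tendsto_image : Tendsto (fun k => hausdorffDist (π '' T k) (π '' Tinf)) atTop (𝓝 0)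
  eq_polarStep : Tinf = polarStep C L (polarSet (π '' Tinf))

lemma IsPolarStepLimit.isProperCSet {Tinf : Set E} (h : IsPolarStepLimit C L π T Tinf)
    (hC : (0 : E) ∈ interior C) : IsProperCSet Tinf := by
  obtain ⟨r, hr, hrC⟩ := nhds_basis_closedBall.mem_iff.1 (mem_interior_iff_mem_nhds.1 hC)
  obtain ⟨ε, hε, hεP⟩ :=
    nhds_basis_closedBall.mem_iff.1 (mem_interior_iff_mem_nhds.1 h.isProperCSet_image.2)
  refine ⟨h.isCSet, mem_interior_iff_mem_nhds.2 (Filter.mem_of_superset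
    (closedBall_mem_nhds 0 (inv_pos.2 (by positivity : 0 < r⁻¹ + ‖L‖ * ε⁻¹))) ?_)⟩
  rw [h.eq_polarStep]
  exact closedBall_subset_polarStep hr hrC (by positivity) (polarSet_subset_closedBall hε hεP)

variable {ε : ℝ}

lemma isPolarStepLimit_iInter [CompleteSpace F]
    (hT : ∀ k, T (k + 1) = polarStep C L (polarSet (π '' T k)))
    (hTC : ∀ k, IsCSet (T k)) (hε : 0 < ε) (hball : ∀ k, closedBall 0 ε ⊆ π '' T k)
    (hanti : Antitone T) : IsPolarStepLimit C L π T (⋂ k, T k) := by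
  have hP : Antitone (π '' T ·) := fun _ _ h => Set.image_mono (hanti h)
  have hPC : ∀ k, IsCSet (π '' T k) := fun k => (hTC k).image π
  have himg : π '' ⋂ k, T k = ⋂ k, π '' T k :=
    image_iInter_of_antitone π.continuous hanti fun k => (hTC k).1
  have hTinf := isCSet_iInter hTC
  refine ⟨hTinf, ⟨hTinf.image π, ?_⟩, tendsto_hausdorffDist_iInter hanti (fun k => (hTC k).1)
    (fun k => ⟨0, (hTC k).2.2⟩), himg ▸ tendsto_hausdorffDist_iInter hP (fun k => (hPC k).1)
    (fun k => ⟨0, (hPC k).2.2⟩), ?_⟩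
  · exact mem_interior_iff_mem_nhds.2 (Filter.mem_of_superset (closedBall_mem_nhds 0 hε)
      (himg ▸ Set.subset_iInter hball))
  calc ⋂ k, T k = ⋂ k, T (k + 1) := (hanti.iInter_nat_add 1).symm
    _ = polarStep C L (closure (⋃ k, polarSet (π '' T k))) := by
      simp only [hT, polarStep_closure, polarStep_iUnion]
    _ = polarStep C L (polarSet (π '' ⋂ k, T k)) := by
      rw [himg, polarSet_iInter_of_antitone hP (fun k => (hPC k).1.isClosed)
        (fun k => (hPC k).2.1) fun k => (hPC k).2.2]

lemma isPolarStepLimit_closure_iUnion [ProperSpace E] [ProperSpace F] (hC : IsProperCSet C)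
    (hT : ∀ k, T (k + 1) = polarStep C L (polarSet (π '' T k)))
    (hTC : ∀ k, IsCSet (T k)) (hε : 0 < ε) (hball : ∀ k, closedBall 0 ε ⊆ π '' T k)
    (hmono : Monotone T) : IsPolarStepLimit C L π T (closure (⋃ k, T k)) := by
  have hP : Monotone (π '' T ·) := fun _ _ h => Set.image_mono (hmono h)
  obtain ⟨r, hr, hrC⟩ := nhds_basis_closedBall.mem_iff.1 (mem_interior_iff_mem_nhds.1 hC.2)
  have hTinf : closure (⋃ k, T k) = polarStep C L (polarSet (closure (⋃ k, π '' T k))) :=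
    calc closure (⋃ k, T k) = closure (⋃ k, T (k + 1)) := by rw [hmono.iUnion_nat_add 1]
      _ = polarStep C L (⋂ k, polarSet (π '' T k)) := by
        simp only [hT]
        exact closure_iUnion_polarStep (isCompact_polarSet hr hrC)
          (fun _ _ h => polarSet_antitone (hP h)) (fun k => isCompact_polarSet hε (hball k))
          (fun _ => convex_polarSet) fun _ => zero_mem_polarSet
      _ = _ := by rw [polarSet_closure, polarSet_iUnion]
  have hTinfC : IsCSet (closure (⋃ k, T k)) := hTinf ▸ isCSet_polarStep hC.1 zero_mem_polarSet
  have himg : π '' closure (⋃ k, T k) = closure (⋃ k, π '' T k) := by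
    rw [image_closure_of_isCompact hTinfC.1 π.continuous.continuousOn, Set.image_iUnion]
  refine ⟨hTinfC, ⟨hTinfC.image π, ?_⟩, tendsto_hausdorffDist_closure_iUnion hmono
    (fun k => ⟨0, (hTC k).2.2⟩) hTinfC.1, himg ▸ tendsto_hausdorffDist_closure_iUnion hP
    (fun k => ⟨0, 0, (hTC k).2.2, map_zero π⟩) (himg ▸ (hTinfC.image π).1), himg ▸ hTinf⟩
  exact mem_interior_iff_mem_nhds.2 (Filter.mem_of_superset (closedBall_mem_nhds 0 hε)
    ((hball 0).trans (Set.image_mono (subset_closure.trans' (Set.subset_iUnion T 0)))))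

end Limit

lemma summable_norm_pow_of_tendsto_zero {R : Type*} [NormedRing R] {a : R}
    (h : Tendsto (a ^ ·) atTop (𝓝 0)) : Summable (‖a ^ ·‖) := by
  obtain ⟨N, hN⟩ := ((tendsto_zero_iff_norm_tendsto_zero.1 h).eventually
    (ge_mem_nhds (by norm_num : (0 : ℝ) < 1 / 2))).exists
  set s : ℕ → ℝ := fun k => ∑ i ∈ Finset.range k, ‖a ^ i‖
  have hs : Monotone s := monotone_nat_of_le_succ fun k => by
    simp only [s, Finset.sum_range_succ, le_add_iff_nonneg_right, norm_nonneg]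
  have htail : ∀ k, s (N + k) ≤ s N + 1 / 2 * s k := fun k => by
    simp only [s, Finset.sum_range_add, Finset.mul_sum]
    gcongr with i
    rw [pow_add]
    exact (norm_mul_le _ _).trans (mul_le_mul_of_nonneg_right hN (norm_nonneg _))
  refine summable_of_sum_range_le (c := 2 * s N) (fun _ => norm_nonneg _) fun k => ?_
  linarith [htail k, hs (Nat.le_add_left k N)]

section OrbitNorm
variable {F : Type*} [NormedAddCommGroup F] [NormedSpace ℝ F] {Θ : F →L[ℝ] F}

def orbitNormSum (Θ : F →L[ℝ] F) (x : F) : ℝ := ∑' i, ‖(Θ ^ i) x‖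

lemma orbitNormSum_nonneg (x : F) : 0 ≤ orbitNormSum Θ x :=
  tsum_nonneg fun _ => norm_nonneg _

lemma orbitNormSum_smul {t : ℝ} (ht : 0 ≤ t) (x : F) :
    orbitNormSum Θ (t • x) = t * orbitNormSum Θ x := by
  simp only [orbitNormSum, map_smul, norm_smul, Real.norm_of_nonneg ht, tsum_mul_left]

lemma summable_norm_pow_apply (hΘ : Summable fun i => ‖Θ ^ i‖) (x : F) :
    Summable fun i => ‖(Θ ^ i) x‖ :=
  (hΘ.mul_right ‖x‖).of_nonneg_of_le (fun _ => norm_nonneg _) fun i => (Θ ^ i).le_opNorm x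

lemma orbitNormSum_eq_norm_add (hΘ : Summable fun i => ‖Θ ^ i‖) (x : F) :
    orbitNormSum Θ x = ‖x‖ + orbitNormSum Θ (Θ x) := by
  rw [orbitNormSum, (summable_norm_pow_apply hΘ x).tsum_eq_zero_add]
  simp only [orbitNormSum, pow_zero, pow_succ, one_apply_eq_self, mul_apply_eq_comp]

lemma norm_le_orbitNormSum (hΘ : Summable fun i => ‖Θ ^ i‖) (x : F) :
    ‖x‖ ≤ orbitNormSum Θ x := by
  rw [orbitNormSum_eq_norm_add hΘ x]
  exact le_add_of_nonneg_right (orbitNormSum_nonneg _)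

lemma orbitNormSum_le (hΘ : Summable fun i => ‖Θ ^ i‖) (x : F) :
    orbitNormSum Θ x ≤ (∑' i, ‖Θ ^ i‖) * ‖x‖ := by
  rw [← tsum_mul_right]
  exact (summable_norm_pow_apply hΘ x).tsum_le_tsum (fun i => (Θ ^ i).le_opNorm x)
    (hΘ.mul_right _)

end OrbitNorm

section Feedback
variable {E F : Type*} [NormedAddCommGroup E] [InnerProductSpace ℝ E]
  [NormedAddCommGroup F] [InnerProductSpace ℝ F] {C : Set E} {L : F →L[ℝ] E} {π : E →L[ℝ] F}
  {Γ : F →L[ℝ] E} {Θ : F →L[ℝ] F}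

lemma mem_image_polarStep_of_feedback (hπΓ : ∀ x, π (Γ x) = x)
    (hΓL : ∀ x p, inner ℝ (Γ x) (L p) = inner ℝ (Θ x) p) (hΘ : Summable fun i => ‖Θ ^ i‖)
    {ρ c : ℝ} (hρ : 0 < ρ) (hC : closedBall 0 ρ ⊆ C) (hc : ‖Γ‖ * ρ⁻¹ ≤ c) {D : Set F}
    (hD : ∀ p ∈ D, ∀ y, inner ℝ p y ≤ c * orbitNormSum Θ y) {x : F}
    (hx : c * orbitNormSum Θ x ≤ 1) : x ∈ π '' polarStep C L D := by
  refine ⟨Γ x, ?_, hπΓ x⟩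
  rintro _ ⟨c', hc', _, ⟨p, hp, rfl⟩, rfl⟩
  have hΓc : inner ℝ (Γ x) c' ≤ c * ‖x‖ :=
    calc inner ℝ (Γ x) c' ≤ ‖Γ x‖ * ‖c'‖ := real_inner_le_norm _ _
      _ ≤ ‖Γ‖ * ‖x‖ * ρ⁻¹ := mul_le_mul (Γ.le_opNorm x)
          (mem_closedBall_zero_iff.1 (polarSet_subset_closedBall hρ hC hc')) (norm_nonneg _)
          (by positivity)
      _ ≤ c * ‖x‖ := by rw [mul_right_comm]; exact mul_le_mul_of_nonneg_right hc (norm_nonneg x)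
  have hΘp : inner ℝ (Θ x) p ≤ c * orbitNormSum Θ (Θ x) := real_inner_comm p (Θ x) ▸ hD p hp _
  calc inner ℝ (Γ x) (c' + L p) ≤ c * ‖x‖ + c * orbitNormSum Θ (Θ x) := by
        rw [inner_add_right, hΓL]; exact add_le_add hΓc hΘp
    _ = c * orbitNormSum Θ x := by rw [orbitNormSum_eq_norm_add hΘ x, mul_add]
    _ ≤ 1 := hx

lemma exists_closedBall_subset_image_polarStep {S : Set F} {T : ℕ → Set E}
    (hC : (0 : E) ∈ interior C) (hS : Bornology.IsBounded S) (hT0 : T 0 = polarStep C L S)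
    (hT : ∀ k, T (k + 1) = polarStep C L (polarSet (π '' T k)))
    (hπΓ : ∀ x, π (Γ x) = x) (hΓL : ∀ x p, inner ℝ (Γ x) (L p) = inner ℝ (Θ x) p)
    (hΘ : Summable fun i => ‖Θ ^ i‖) : ∃ ε > 0, ∀ k, closedBall 0 ε ⊆ π '' T k := by
  obtain ⟨ρ, hρ, hρC⟩ := nhds_basis_closedBall.mem_iff.1 (mem_interior_iff_mem_nhds.1 hC)
  obtain ⟨d, hd, hdS⟩ := hS.subset_closedBall_lt 0 0
  set c := ‖Γ‖ * ρ⁻¹ + d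
  have hc : 0 ≤ c := by positivity
  have hsub : ∀ k, {x | c * orbitNormSum Θ x ≤ 1} ⊆ π '' T k := by
    intro k
    induction k with
    | zero =>
      refine fun x hx => hT0 ▸ mem_image_polarStep_of_feedback hπΓ hΓL hΘ hρ hρC
        (le_add_of_nonneg_right hd.le) (fun p hp y => ?_) hx
      calc inner ℝ p y ≤ ‖p‖ * ‖y‖ := real_inner_le_norm p y
        _ ≤ c * orbitNormSum Θ y := mul_le_mul
          ((mem_closedBall_zero_iff.1 (hdS hp)).trans (le_add_of_nonneg_left (by positivity)))
          (norm_le_orbitNormSum hΘ y) (norm_nonneg y) hc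
    | succ k ih =>
      refine fun x hx => hT k ▸ mem_image_polarStep_of_feedback hπΓ hΓL hΘ hρ hρC
        (le_add_of_nonneg_right hd.le) (fun p hp y => ?_) hx
      exact inner_le_of_mem_polarSet (fun y => mul_nonneg hc (orbitNormSum_nonneg y))
        (fun t ht y => by rw [orbitNormSum_smul ht, mul_left_comm]) ih hp y
  have hsum : 0 ≤ ∑' i, ‖Θ ^ i‖ := tsum_nonneg fun _ => norm_nonneg _
  refine ⟨(c * ∑' i, ‖Θ ^ i‖ + 1)⁻¹, by positivity, fun k x hx => hsub k ?_⟩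
  rw [mem_closedBall_zero_iff] at hx
  calc c * orbitNormSum Θ x ≤ c * ((∑' i, ‖Θ ^ i‖) * ‖x‖) := by gcongr; exact orbitNormSum_le hΘ x
    _ ≤ (c * ∑' i, ‖Θ ^ i‖ + 1) * (c * ∑' i, ‖Θ ^ i‖ + 1)⁻¹ := by
      rw [← mul_assoc]; gcongr; linarith [mul_nonneg hc hsum]
    _ = 1 := mul_inv_cancel₀ (by positivity)

end Feedback

lemma tendsto_toEuclideanCLM_pow {ι : Type*} [Fintype ι] [DecidableEq ι] {M : Matrix ι ι ℝ}
    (h : Tendsto (M ^ ·) atTop (𝓝 0)) :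
    Tendsto (Matrix.toEuclideanCLM (𝕜 := ℝ) M ^ ·) atTop (𝓝 0) := by
  have hc : Continuous (Matrix.toEuclideanCLM (𝕜 := ℝ) (n := ι)) :=
    LinearMap.continuous_of_finiteDimensional
      (Matrix.toEuclideanCLM (𝕜 := ℝ) (n := ι)).toAlgEquiv.toLinearMap
  simpa only [Function.comp_def, map_pow, map_zero] using (hc.tendsto 0).comp h

section StateSpace
variable (A : Matrix (Fin n) (Fin n) ℝ) (B : Matrix (Fin n) (Fin m) ℝ)
  (K : Matrix (Fin m) (Fin n) ℝ)

-- `mtrCLM A B` and `pxCLM` coerce definitionally to `Mtr A B` and `Pxproj`.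
def mtrCLM : Rsp n →L[ℝ] Rsp2 n m :=
  (WithLp.prodContinuousLinearEquiv 2 ℝ (Rsp n) (Rsp m)).symm.toContinuousLinearMap ∘L
    (Matrix.toEuclideanLin Aᵀ).toContinuousLinearMap.prod
      (Matrix.toEuclideanLin Bᵀ).toContinuousLinearMap

def pxCLM : Rsp2 n m →L[ℝ] Rsp n :=
  ContinuousLinearMap.fst ℝ (Rsp n) (Rsp m) ∘L
    (WithLp.prodContinuousLinearEquiv 2 ℝ (Rsp n) (Rsp m)).toContinuousLinearMap

def feedbackCLM : Rsp n →L[ℝ] Rsp2 n m :=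
  (WithLp.prodContinuousLinearEquiv 2 ℝ (Rsp n) (Rsp m)).symm.toContinuousLinearMap ∘L
    (ContinuousLinearMap.id ℝ (Rsp n)).prod (Matrix.toEuclideanLin K).toContinuousLinearMap

lemma inner_feedbackCLM_mtrCLM (x p : Rsp n) :
    inner ℝ (feedbackCLM K x) (mtrCLM A B p) =
      inner ℝ (Matrix.toEuclideanCLM (𝕜 := ℝ) (A + B * K) x) p := by
  simp [feedbackCLM, mtrCLM, WithLp.prod_inner_apply, EuclideanSpace.inner_eq_star_dotProduct,
    Matrix.toLpLin_apply, Matrix.dotProduct_mulVec, Matrix.mulVec_transpose, Matrix.vecMul_vecMul]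

end StateSpace

/-- convergence of both 𝒫_k and 𝒯_k, with the limits satisfying
𝒯_∞ = (𝒞* ⊕ Mᵀ𝒫_∞*)*, 𝒫_∞ = P_x𝒯_∞, so 𝒫_∞ solves the fixed-point set equation. -/
theorem stmt_15 (n m : ℕ) (A : Matrix (Fin n) (Fin n) ℝ) (B : Matrix (Fin n) (Fin m) ℝ)
    (hstab : ∃ K : Matrix (Fin m) (Fin n) ℝ,
      Tendsto (fun k : ℕ => (A + B * K) ^ k) atTop (nhds 0))
    (C : Set (Rsp2 n m)) (hC : IsProperCSet C)
    (S : Set (Rsp n)) (hS : IsCSet S)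
    (T : ℕ → Set (Rsp2 n m)) (P : ℕ → Set (Rsp n))
    (hT0 : T 0 = polarSet (polarSet C + Mtr A B '' S))
    (hP0 : P 0 = Pxproj '' T 0)
    (hTs : ∀ k : ℕ, T (k + 1) = polarSet (polarSet C + Mtr A B '' polarSet (P k)))
    (hPs : ∀ k : ℕ, P (k + 1) = Pxproj '' T (k + 1))
    (hmono : S ⊆ polarSet (P 0) ∨ polarSet (P 0) ⊆ S) :
    ∃ (Pinf : Set (Rsp n)) (Tinf : Set (Rsp2 n m)),
      IsProperCSet Pinf ∧ IsProperCSet Tinf ∧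
      Tendsto (fun k : ℕ => Metric.hausdorffDist (P k) Pinf) atTop (nhds 0) ∧
      Tendsto (fun k : ℕ => Metric.hausdorffDist (T k) Tinf) atTop (nhds 0) ∧
      Tinf = polarSet (polarSet C + Mtr A B '' polarSet Pinf) ∧
      Pinf = Pxproj '' Tinf ∧
      Pinf = Pxproj '' polarSet (polarSet C + Mtr A B '' polarSet Pinf) := by
  obtain ⟨K, hK⟩ := hstab
  have hP : ∀ k, P k = pxCLM '' T k := fun k => by cases k; exacts [hP0, hPs _]
  have hT : ∀ k, T (k + 1) = polarStep C (mtrCLM A B) (polarSet (pxCLM '' T k)) :=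
    fun k => by rw [hTs, hP]; rfl
  have hTC : ∀ k, IsCSet (T k)
    | 0 => hT0 ▸ isCSet_polarStep (L := mtrCLM A B) hC.1 hS.2.2
    | k + 1 => hT k ▸ isCSet_polarStep hC.1 zero_mem_polarSet
  obtain ⟨ε, hε, hball⟩ := exists_closedBall_subset_image_polarStep hC.2 hS.1.isBounded hT0 hT
    (fun _ => rfl) (inner_feedbackCLM_mtrCLM A B K)
    (summable_norm_pow_of_tendsto_zero (tendsto_toEuclideanCLM_pow hK))
  obtain ⟨Tinf, hlim⟩ : ∃ Tinf, IsPolarStepLimit C (mtrCLM A B) pxCLM T Tinf := by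
    rcases hmono with h | h
    · refine ⟨_, isPolarStepLimit_iInter hT hTC hε hball
        (antitone_of_succ_eq_map monotone_polarStep_polarSet_image hT ?_)⟩
      rw [hT 0, ← hP 0, hT0]
      exact polarStep_antitone (C := C) (L := mtrCLM A B) h
    · refine ⟨_, isPolarStepLimit_closure_iUnion hC hT hTC hε hball
        (monotone_of_succ_eq_map monotone_polarStep_polarSet_image hT ?_)⟩
      rw [hT 0, ← hP 0, hT0]
      exact polarStep_antitone (C := C) (L := mtrCLM A B) h
  refine ⟨pxCLM '' Tinf, Tinf, hlim.isProperCSet_image, hlim.isProperCSet hC.2, ?_, hlim.tendsto,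
    hlim.eq_polarStep, rfl, congrArg (pxCLM '' ·) hlim.eq_polarStep⟩
  simp_rw [hP]
  exact hlim.tendsto_image
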